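/- arXiv:1904.07729 — 5 statements merged into one kernel-verified Lean document; each statement's English description precedes it below -/
import Mathlib

section
/- The starting Latin square of order n=2t is a Latin square: every symbol in {1,...,2t} appears exactly once in each row and each column. -/
/-!
Reduced with `rmod t`, each map `x ↦ ±x + c` becomes a bijection from any `t` consecutive
integers onto `{1, …, t}`: it is injective modulo `t` because `±1` is a unit. Each row and each
column of the square splits into the halves `{1, …, t}` and `{t + 1, …, 2t}`; on each half the
entries have this form shifted by `0` or `t`, with opposite shifts on the two halves, so the two
halves fill the two blocks of symbols bijectively.
-/

/-- The representative of `x` modulo `t` in `{1, ..., t}`. -/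
def rmod (t : ℕ) (x : ℤ) : ℤ := (x - 1) % t + 1

/-- The starting Latin square of order `2*t`. -/
def SLS (t : ℕ) (i j : ℤ) : ℤ :=
  if i ≤ t ∧ j ≤ t then rmod t (j - i + 1)
  else if t < i ∧ t < j then rmod t (i - j + 1)
  else if i ≤ t then rmod t (j - i + 1) + t
  else rmod t (i - j + 1) + t

open Set

theorem Set.BijOn.union_of_disjoint {α β : Type*} {f : α → β} {s₁ s₂ : Set α} {t₁ t₂ : Set β}
    (h₁ : BijOn f s₁ t₁) (h₂ : BijOn f s₂ t₂) (ht : Disjoint t₁ t₂) :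
    BijOn f (s₁ ∪ s₂) (t₁ ∪ t₂) := by
  refine h₁.union h₂ ?_
  rintro x (hx | hx) y (hy | hy) hxy
  · exact h₁.injOn hx hy hxy
  · exact absurd hxy (ht.ne_of_mem (h₁.mapsTo hx) (h₂.mapsTo hy))
  · exact absurd hxy.symm (ht.ne_of_mem (h₁.mapsTo hy) (h₂.mapsTo hx))
  · exact h₂.injOn hx hy hxy

theorem Set.BijOn.existsUnique_of_mem {α β : Type*} {f : α → β} {s : Set α} {t : Set β}
    (h : BijOn f s t) {b : β} (hb : b ∈ t) : ∃! a, a ∈ s ∧ f a = b := by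
  obtain ⟨a, ha, rfl⟩ := h.surjOn hb
  exact ⟨a, ⟨ha, rfl⟩, fun a' ⟨ha', he⟩ => h.injOn ha' ha he⟩

theorem Int.eq_of_modEq_of_mem_Ioc {n m x y : ℤ} (h : x ≡ y [ZMOD n])
    (hx : x ∈ Ioc m (m + n)) (hy : y ∈ Ioc m (m + n)) : x = y := by
  rw [mem_Ioc] at hx hy
  have := Int.eq_zero_of_abs_lt_dvd h.dvd (abs_sub_lt_iff.2 ⟨by omega, by omega⟩)
  omega

theorem rmod_modEq (t : ℕ) (x : ℤ) : rmod t x ≡ x [ZMOD t] := by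
  simpa [rmod] using (Int.mod_modEq (x - 1) t).add_right 1

theorem rmod_mem_Ioc {t : ℕ} (ht : 0 < t) (x : ℤ) : rmod t x ∈ Ioc 0 (t : ℤ) := by
  have h₀ := Int.emod_nonneg (x - 1) (by omega : (t : ℤ) ≠ 0)
  have h₁ := Int.emod_lt_of_pos (x - 1) (by omega : (0 : ℤ) < t)
  simp only [rmod, mem_Ioc]
  omega

theorem rmod_eq_of_modEq {t : ℕ} {x s : ℤ} (hs : s ∈ Ioc 0 (t : ℤ)) (h : x ≡ s [ZMOD t]) :
    rmod t x = s := by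
  rw [mem_Ioc] at hs
  rw [rmod, h.sub_right 1, Int.emod_eq_of_lt (by omega) (by omega), sub_add_cancel]

theorem bijOn_rmod_affine {t : ℕ} {ε : ℤ} (hε : IsUnit ε) (c a m : ℤ) :
    BijOn (fun x => rmod t (ε * x + c) + a) (Ioc m (m + t)) (Ioc a (a + t)) := by
  have hεε := Int.isUnit_mul_self hε
  refine ⟨fun x hx => ?_, fun x hx y hy hxy => ?_, fun s hs => ?_⟩
  · have := rmod_mem_Ioc (t := t) (by simp only [mem_Ioc] at hx; omega) (ε * x + c)
    simp only [mem_Ioc] at this ⊢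
    omega
  · have h : ε * x + c ≡ ε * y + c [ZMOD t] :=
      (rmod_modEq t _).symm.trans (add_right_cancel hxy ▸ rmod_modEq t _)
    have h' := (h.add_right_cancel' c).mul_left ε
    rw [← mul_assoc, ← mul_assoc, hεε, one_mul, one_mul] at h'
    exact Int.eq_of_modEq_of_mem_Ioc h' hx hy
  · have ht : 0 < t := by simp only [mem_Ioc] at hs; omega
    -- `ε⁻¹ = ε`, so `ε * (s - a - c)` is a preimage of `s - a` modulo `t`; shift it into the window
    set x := m + rmod t (ε * (s - a - c) - m)
    have hx := rmod_mem_Ioc ht (ε * (s - a - c) - m)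
    refine ⟨x, by simp only [mem_Ioc] at hx ⊢; omega, ?_⟩
    have hsa : s - a ∈ Ioc 0 (t : ℤ) := by simp only [mem_Ioc] at hs ⊢; omega
    suffices rmod t (ε * x + c) = s - a by simp only [this, sub_add_cancel]
    refine rmod_eq_of_modEq hsa ?_
    calc ε * x + c ≡ ε * (m + (ε * (s - a - c) - m)) + c [ZMOD t] :=
          (((rmod_modEq t _).add_left m).mul_left ε).add_right c
      _ = s - a := by linear_combination (s - a - c) * hεε

theorem bijOn_Ioc_of_rmod_halves {f : ℤ → ℤ} {t : ℕ} {ε₁ ε₂ c₁ c₂ a : ℤ}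
    (hε₁ : IsUnit ε₁) (hε₂ : IsUnit ε₂) (ha : a = 0 ∨ a = t)
    (hlow : EqOn f (fun x => rmod t (ε₁ * x + c₁) + a) (Ioc 0 t))
    (hhigh : EqOn f (fun x => rmod t (ε₂ * x + c₂) + (t - a)) (Ioc t (2 * t))) :
    BijOn f (Ioc 0 (2 * t)) (Ioc 0 (2 * t)) := by
  have h₁ := (bijOn_rmod_affine hε₁ c₁ a 0).congr (zero_add (t : ℤ) ▸ hlow.symm)
  have h₂ := (bijOn_rmod_affine hε₂ c₂ (t - a) t).congr (two_mul (t : ℤ) ▸ hhigh.symm)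
  have hdisj : Disjoint (Ioc a (a + t)) (Ioc (t - a) (t - a + t)) :=
    disjoint_left.2 fun x hx hx' => by simp only [mem_Ioc] at hx hx'; omega
  convert (zero_add (t : ℤ) ▸ h₁).union_of_disjoint (two_mul (t : ℤ) ▸ h₂) hdisj using 1
  · rw [Ioc_union_Ioc_eq_Ioc (by omega) (by omega)]
  · ext x; simp only [mem_Ioc, mem_union]; omega

section SLS

variable {t : ℕ} {i j : ℤ}

theorem SLS_of_le_of_le (hi : i ≤ t) (hj : j ≤ t) : SLS t i j = rmod t (j - i + 1) := by
  simp [SLS, hi, hj]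

theorem SLS_of_lt_of_lt (hi : (t : ℤ) < i) (hj : (t : ℤ) < j) :
    SLS t i j = rmod t (i - j + 1) := by
  simp [SLS, hi, hj, hi.not_ge]

theorem SLS_of_le_of_lt (hi : i ≤ t) (hj : (t : ℤ) < j) :
    SLS t i j = rmod t (j - i + 1) + t := by
  simp [SLS, hi, hj, hj.not_ge]

theorem SLS_of_lt_of_le (hi : (t : ℤ) < i) (hj : j ≤ t) :
    SLS t i j = rmod t (i - j + 1) + t := by
  simp [SLS, hi, hj, hi.not_ge]

end SLS

theorem bijOn_SLS_row (t : ℕ) (i : ℤ) : BijOn (SLS t i) (Ioc 0 (2 * t)) (Ioc 0 (2 * t)) := by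
  rcases le_or_gt i t with hi | hi
  · refine bijOn_Ioc_of_rmod_halves isUnit_one isUnit_one (Or.inl rfl) (c₁ := 1 - i) (c₂ := 1 - i)
      (fun j hj => ?_) (fun j hj => ?_)
    · rw [SLS_of_le_of_le hi hj.2]; ring_nf
    · rw [SLS_of_le_of_lt hi hj.1]; ring_nf
  · refine bijOn_Ioc_of_rmod_halves isUnit_one.neg isUnit_one.neg (Or.inr rfl) (c₁ := i + 1)
      (c₂ := i + 1) (fun j hj => ?_) (fun j hj => ?_)
    · rw [SLS_of_lt_of_le hi hj.2]; ring_nf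
    · rw [SLS_of_lt_of_lt hi hj.1]; ring_nf

theorem bijOn_SLS_col (t : ℕ) (j : ℤ) : BijOn (SLS t · j) (Ioc 0 (2 * t)) (Ioc 0 (2 * t)) := by
  rcases le_or_gt j t with hj | hj
  · refine bijOn_Ioc_of_rmod_halves isUnit_one.neg isUnit_one (Or.inl rfl) (c₁ := j + 1)
      (c₂ := 1 - j) (fun i hi => ?_) (fun i hi => ?_)
    · rw [SLS_of_le_of_le hi.2 hj]; ring_nf
    · rw [SLS_of_lt_of_le hi.1 hj]; ring_nf
  · refine bijOn_Ioc_of_rmod_halves isUnit_one.neg isUnit_one (Or.inr rfl) (c₁ := j + 1)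
      (c₂ := 1 - j) (fun i hi => ?_) (fun i hi => ?_)
    · rw [SLS_of_le_of_lt hi.2 hj]; ring_nf
    · rw [SLS_of_lt_of_lt hi.1 hj]; ring_nf

theorem starting_latin_square_is_latin_general (t : ℕ) :
    (∀ i ∈ Finset.Icc (1:ℤ) (2*t), ∀ s ∈ Finset.Icc (1:ℤ) (2*t),
      ∃! j, j ∈ Finset.Icc (1:ℤ) (2*t) ∧ SLS t i j = s) ∧
    (∀ j ∈ Finset.Icc (1:ℤ) (2*t), ∀ s ∈ Finset.Icc (1:ℤ) (2*t),
      ∃! i, i ∈ Finset.Icc (1:ℤ) (2*t) ∧ SLS t i j = s) := by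
  have hIcc : (Finset.Icc (1 : ℤ) (2 * t) : Set ℤ) = Ioc (0 : ℤ) (2 * t) := by
    ext x; simp only [Finset.coe_Icc, mem_Icc, mem_Ioc]; omega
  have hrow := fun i => hIcc ▸ bijOn_SLS_row t i
  have hcol := fun j => hIcc ▸ bijOn_SLS_col t j
  exact ⟨fun i _ s hs => (hrow i).existsUnique_of_mem hs,
    fun j _ s hs => (hcol j).existsUnique_of_mem hs⟩

/-- The starting Latin square of order `n = 2t` is a Latin square: every symbol in
`{1,...,2t}` appears exactly once in each row and exactly once in each column. -/
theorem starting_latin_square_is_latin (t : ℕ) (ht : 1 ≤ t) :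
    (∀ i ∈ Finset.Icc (1:ℤ) (2*t), ∀ s ∈ Finset.Icc (1:ℤ) (2*t),
      ∃! j, j ∈ Finset.Icc (1:ℤ) (2*t) ∧ SLS t i j = s) ∧
    (∀ j ∈ Finset.Icc (1:ℤ) (2*t), ∀ s ∈ Finset.Icc (1:ℤ) (2*t),
      ∃! i, i ∈ Finset.Icc (1:ℤ) (2*t) ∧ SLS t i j = s) :=
  starting_latin_square_is_latin_general t
end

section
/- In the starting Latin square of order 2t, any two cells in the same row lying in adjacent quadrants (one with column index ≤ t, the other with column index > t, or analogously for row index) determine a unique intercalate containing both cells. -/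
/-!
After relabelling, the starting square is the Cayley table `(x, y) ↦ y * x⁻¹` of the dihedral
group `D_t`: indices `i ≤ t` become the rotations `r i`, indices `i > t` the reflections `sr i`,
and the symbols `k + 1` and `k + 1 + t` stand for `r k` and `sr k`. In a Cayley table the cells
`(x, y₁)` and `(x, y₂)` lie in an intercalate with row `x₂` exactly when `x₂ = x * (y₂⁻¹ * y₁)`
and `y₂⁻¹ * y₁` is an involution; for columns in adjacent quadrants it is a reflection.
Transposing the table inverts its symbols, so the column statement is the row statement again.
-/

open DihedralGroup Function Set

section CayleyTable

variable {G : Type*} [Group G]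

theorem existsUnique_intercalate_of_orderOf_eq_two {x y₁ y₂ : G}
    (h : orderOf (y₂⁻¹ * y₁) = 2) :
    ∃! x₂, x₂ ≠ x ∧ y₂ * x₂⁻¹ = y₁ * x⁻¹ ∧ y₁ * x₂⁻¹ = y₂ * x⁻¹ := by
  have hinv : (y₂⁻¹ * y₁)⁻¹ = y₂⁻¹ * y₁ :=
    inv_eq_of_mul_eq_one_right (by rw [← sq, ← h, pow_orderOf_eq_one])
  have hne : y₂⁻¹ * y₁ ≠ 1 := fun h1 => by simp [h1] at h
  refine ⟨x * (y₂⁻¹ * y₁), ⟨by simpa using hne, ?_, ?_⟩, ?_⟩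
  · rw [mul_inv_rev, hinv]; group
  · group
  · rintro x₂ ⟨-, h₁, -⟩
    calc x₂ = ((y₂⁻¹ * y₁) * x⁻¹)⁻¹ := by rw [mul_assoc, ← h₁]; group
      _ = x * (y₂⁻¹ * y₁) := by rw [mul_inv_rev, inv_inv, hinv]

variable {α γ : Type*} {s : Set α} {ψ : α → G} {code : G → γ} {L : α → α → γ}

theorem existsUnique_intercalate_row (hψ : BijOn ψ s univ) (hcode : Injective code)
    (hL : ∀ a ∈ s, ∀ b ∈ s, L a b = code (ψ b * (ψ a)⁻¹)) {a b₁ b₂ : α}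
    (ha : a ∈ s) (hb₁ : b₁ ∈ s) (hb₂ : b₂ ∈ s) (h : orderOf ((ψ b₂)⁻¹ * ψ b₁) = 2) :
    ∃! a₂, a₂ ∈ s ∧ a₂ ≠ a ∧ L a₂ b₂ = L a b₁ ∧ L a₂ b₁ = L a b₂ := by
  obtain ⟨g, ⟨hne, h₁, h₂⟩, huniq⟩ := existsUnique_intercalate_of_orderOf_eq_two (x := ψ a) h
  obtain ⟨a₂, ha₂, rfl⟩ := hψ.surjOn (mem_univ g)
  refine ⟨a₂, ⟨ha₂, ne_of_apply_ne ψ hne, ?_, ?_⟩, ?_⟩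
  · rw [hL a₂ ha₂ b₂ hb₂, hL a ha b₁ hb₁, h₁]
  · rw [hL a₂ ha₂ b₁ hb₁, hL a ha b₂ hb₂, h₂]
  · rintro a' ⟨ha', hne', e₁, e₂⟩
    rw [hL a' ha' b₂ hb₂, hL a ha b₁ hb₁] at e₁
    rw [hL a' ha' b₁ hb₁, hL a ha b₂ hb₂] at e₂
    exact hψ.injOn ha' ha₂ (huniq _ ⟨hψ.injOn.ne ha' ha hne', hcode e₁, hcode e₂⟩)

theorem existsUnique_intercalate_column (hψ : BijOn ψ s univ) (hcode : Injective code)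
    (hL : ∀ a ∈ s, ∀ b ∈ s, L a b = code (ψ b * (ψ a)⁻¹)) {b a₁ a₂ : α}
    (hb : b ∈ s) (ha₁ : a₁ ∈ s) (ha₂ : a₂ ∈ s) (h : orderOf ((ψ a₂)⁻¹ * ψ a₁) = 2) :
    ∃! b₂, b₂ ∈ s ∧ b₂ ≠ b ∧ L a₂ b₂ = L a₁ b ∧ L a₁ b₂ = L a₂ b :=
  existsUnique_intercalate_row (L := flip L) (code := code ∘ Inv.inv) hψ
    (hcode.comp inv_injective) (fun a ha b hb => by simp [flip, hL b hb a ha]) hb ha₁ ha₂ h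

end CayleyTable

namespace ZMod

theorem intCast_bijOn_Ioc {n : ℕ} [NeZero n] (k : ℤ) :
    BijOn (Int.cast : ℤ → ZMod n) (Ioc k (k + n)) univ := by
  refine ⟨mapsTo_univ _ _, fun i hi j hj hij => ?_, fun z _ => ?_⟩
  · have hdvd := (intCast_eq_intCast_iff_dvd_sub i j n).1 hij
    have hlt : |j - i| < n := abs_sub_lt_iff.2 ⟨by linarith [hi.1, hj.2], by linarith [hi.2, hj.1]⟩
    linarith [Int.eq_zero_of_abs_lt_dvd hdvd hlt]
  · have hn : (0 : ℤ) < n := by exact_mod_cast Nat.pos_of_neZero n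
    have h₀ := Int.emod_nonneg (k - z.val) hn.ne'
    have h₁ := Int.emod_lt_of_pos (k - z.val) hn
    refine ⟨k + n - (k - z.val) % n, ⟨by linarith, by linarith⟩, ?_⟩
    push_cast [intCast_mod, natCast_self, natCast_zmod_val]
    ring

end ZMod

namespace StartingSquare

def label (t : ℕ) (i : ℤ) : DihedralGroup t := if i ≤ t then r i else sr i

def symbol (t : ℕ) : DihedralGroup t → ℤ
  | r k => k.val + 1
  | sr k => k.val + 1 + t

variable {t : ℕ}

theorem rmod_eq_val_add_one [NeZero t] (x : ℤ) : rmod t x = ((x - 1 : ℤ) : ZMod t).val + 1 := by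
  rw [rmod, ZMod.val_intCast]

theorem SLS_eq_symbol [NeZero t] (i j : ℤ) : SLS t i j = symbol t (label t j * (label t i)⁻¹) := by
  unfold SLS label
  split_ifs <;>
    simp [symbol, rmod_eq_val_add_one, r_mul_r, r_mul_sr, sr_mul_r, sr_mul_sr, sub_eq_add_neg] <;>
    omega

theorem symbol_injective [NeZero t] : Injective (symbol t) := by
  rintro (k | k) (l | l) h <;> simp only [symbol] at h
  · exact congrArg r (ZMod.val_injective t (by omega))
  · have := k.val_lt; omega
  · have := l.val_lt; omega
  · exact congrArg sr (ZMod.val_injective t (by omega))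

theorem label_bijOn [NeZero t] : BijOn (label t) (Finset.Icc (1:ℤ) (2 * t) : Set ℤ) univ := by
  have top := ZMod.intCast_bijOn_Ioc (n := t) 0
  have bottom := ZMod.intCast_bijOn_Ioc (n := t) t
  refine ⟨mapsTo_univ _ _, fun i hi j hj hij => ?_, ?_⟩
  · simp only [Finset.coe_Icc, mem_Icc] at hi hj
    unfold label at hij
    split_ifs at hij with hit hjt hjt
    · exact top.injOn ⟨by omega, by omega⟩ ⟨by omega, by omega⟩ (r.inj hij)
    · exact bottom.injOn ⟨by omega, by omega⟩ ⟨by omega, by omega⟩ (sr.inj hij)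
  · rintro (k | k) -
    · obtain ⟨i, ⟨hi₀, hi₁⟩, rfl⟩ := top.surjOn (mem_univ k)
      refine ⟨i, by simp only [Finset.coe_Icc, mem_Icc]; omega, ?_⟩
      simp [label, show i ≤ t by omega]
    · obtain ⟨i, ⟨hi₀, hi₁⟩, rfl⟩ := bottom.surjOn (mem_univ k)
      refine ⟨i, by simp only [Finset.coe_Icc, mem_Icc]; omega, ?_⟩
      simp [label, show ¬ i ≤ t by omega]

theorem orderOf_label_inv_mul {j₁ j₂ : ℤ} (h : (j₁ ≤ t ∧ (t:ℤ) < j₂) ∨ (j₂ ≤ t ∧ (t:ℤ) < j₁)) :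
    orderOf ((label t j₂)⁻¹ * label t j₁) = 2 := by
  rcases h with ⟨h₁, h₂⟩ | ⟨h₁, h₂⟩ <;>
    simp [label, h₁, not_le.2 h₂, inv_r, inv_sr, r_mul_sr, sr_mul_r, orderOf_sr]

end StartingSquare

open StartingSquare in
/-- In the starting Latin square of order `2t`, two cells in the same row lying in
adjacent quadrants (one column index `≤ t`, the other `> t`), and analogously two cells
in the same column lying in adjacent quadrants, determine a unique intercalate
containing both cells. -/
theorem starting_latin_square_adjacent_unique_intercalate (t : ℕ) (ht : 1 ≤ t) :
    (∀ i ∈ Finset.Icc (1:ℤ) (2*t), ∀ j₁ ∈ Finset.Icc (1:ℤ) (2*t),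
      ∀ j₂ ∈ Finset.Icc (1:ℤ) (2*t),
      ((j₁ ≤ t ∧ (t:ℤ) < j₂) ∨ (j₂ ≤ t ∧ (t:ℤ) < j₁)) →
      ∃! i₂, i₂ ∈ Finset.Icc (1:ℤ) (2*t) ∧ i₂ ≠ i ∧
        SLS t i₂ j₂ = SLS t i j₁ ∧ SLS t i₂ j₁ = SLS t i j₂) ∧
    (∀ j ∈ Finset.Icc (1:ℤ) (2*t), ∀ i₁ ∈ Finset.Icc (1:ℤ) (2*t),
      ∀ i₂ ∈ Finset.Icc (1:ℤ) (2*t),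
      ((i₁ ≤ t ∧ (t:ℤ) < i₂) ∨ (i₂ ≤ t ∧ (t:ℤ) < i₁)) →
      ∃! j₂, j₂ ∈ Finset.Icc (1:ℤ) (2*t) ∧ j₂ ≠ j ∧
        SLS t i₂ j₂ = SLS t i₁ j ∧ SLS t i₁ j₂ = SLS t i₂ j) := by
  have : NeZero t := ⟨by omega⟩
  have hSLS : ∀ i ∈ (Finset.Icc (1:ℤ) (2*t) : Set ℤ), ∀ j ∈ (Finset.Icc (1:ℤ) (2*t) : Set ℤ),
      SLS t i j = symbol t (label t j * (label t i)⁻¹) := fun i _ j _ => SLS_eq_symbol i j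
  exact ⟨fun i hi j₁ hj₁ j₂ hj₂ hadj => existsUnique_intercalate_row label_bijOn
      symbol_injective hSLS hi hj₁ hj₂ (orderOf_label_inv_mul hadj),
    fun j hj i₁ hi₁ i₂ hi₂ hadj => existsUnique_intercalate_column label_bijOn
      symbol_injective hSLS hj hi₁ hi₂ (orderOf_label_inv_mul hadj)⟩
end

section
/- In any Latin cube, the intersection of two subcubes of order 2 is either empty, a single cell, or all eight cells (i.e., the subcubes coincide). -/
/-- `L` is a Latin cube of order `n`: every symbol occurs exactly once in each row,
each column, and each file. -/
def IsLatinCube {n : ℕ} (L : Fin n → Fin n → Fin n → Fin n) : Prop :=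
  (∀ i k, Function.Bijective (fun j => L i j k)) ∧
  (∀ j k, Function.Bijective (fun i => L i j k)) ∧
  (∀ i j, Function.Bijective (fun k => L i j k))

/-- `S` is a subcube of order 2 of the Latin cube `L`. -/
def IsSubcube {n : ℕ} (L : Fin n → Fin n → Fin n → Fin n)
    (S : Finset (Fin n × Fin n × Fin n)) : Prop :=
  ∃ i₁ i₂ j₁ j₂ k₁ k₂ : Fin n, i₁ ≠ i₂ ∧ j₁ ≠ j₂ ∧ k₁ ≠ k₂ ∧
    L i₁ j₁ k₁ = L i₂ j₂ k₁ ∧ L i₁ j₁ k₁ = L i₁ j₂ k₂ ∧ L i₁ j₁ k₁ = L i₂ j₁ k₂ ∧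
    L i₁ j₂ k₁ = L i₂ j₁ k₁ ∧ L i₁ j₂ k₁ = L i₁ j₁ k₂ ∧ L i₁ j₂ k₁ = L i₂ j₂ k₂ ∧
    S = {(i₁, j₁, k₁), (i₁, j₂, k₁), (i₂, j₁, k₁), (i₂, j₂, k₁),
         (i₁, j₁, k₂), (i₁, j₂, k₂), (i₂, j₁, k₂), (i₂, j₂, k₂)}

/-!
A subcube on `I × J × K` (each a pair) keeps its symbol when two coordinates are switched to their
partners at once. Suppose two distinct cells `p = (a, b, c)` and `q = (a', b', c')` lie in two
subcubes. If `a ≠ a'`, both subcubes have first coordinates `{a, a'}`. If `a = a'`, say `b ≠ b'`,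
then the partner `x` of `a` satisfies `L x b c = L a b' c`, which fixes `x` by the Latin
property. By symmetry the other coordinates are determined as well, so the subcubes coincide.
-/

namespace Finset

theorem exists_eq_pair_of_card_eq_two {α : Type*} [DecidableEq α] {s : Finset α} {a : α}
    (hs : s.card = 2) (ha : a ∈ s) : ∃ x, x ≠ a ∧ s = {a, x} := by
  obtain ⟨x, hx⟩ := card_eq_one.1 (by rw [card_erase_of_mem ha, hs] : (s.erase a).card = 1)
  exact ⟨x, ne_of_mem_erase (hx ▸ mem_singleton_self x), by rw [← hx, insert_erase ha]⟩

end Finset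

structure IsFlipInvariant {α β : Type*} (L : α → α → α → β) (I J K : Finset α) : Prop where
  flip₁₂ : ∀ x ∈ I, ∀ x' ∈ I, ∀ y ∈ J, ∀ y' ∈ J, ∀ z ∈ K,
    x ≠ x' → y ≠ y' → L x y z = L x' y' z
  flip₁₃ : ∀ x ∈ I, ∀ x' ∈ I, ∀ y ∈ J, ∀ z ∈ K, ∀ z' ∈ K,
    x ≠ x' → z ≠ z' → L x y z = L x' y z'
  flip₂₃ : ∀ x ∈ I, ∀ y ∈ J, ∀ y' ∈ J, ∀ z ∈ K, ∀ z' ∈ K,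
    y ≠ y' → z ≠ z' → L x y z = L x y' z'

namespace IsFlipInvariant

variable {α β : Type*} {L : α → α → α → β} {I J K : Finset α}

theorem swap₁₂ (h : IsFlipInvariant L I J K) :
    IsFlipInvariant (fun y x z => L x y z) J I K where
  flip₁₂ y hy y' hy' x hx x' hx' z hz hyy' hxx' := h.flip₁₂ x hx x' hx' y hy y' hy' z hz hxx' hyy'
  flip₁₃ y hy y' hy' x hx z hz z' hz' := h.flip₂₃ x hx y hy y' hy' z hz z' hz'
  flip₂₃ y hy x hx x' hx' z hz z' hz' := h.flip₁₃ x hx x' hx' y hy z hz z' hz'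

theorem swap₁₃ (h : IsFlipInvariant L I J K) :
    IsFlipInvariant (fun z y x => L x y z) K J I where
  flip₁₂ z hz z' hz' y hy y' hy' x hx hzz' hyy' := h.flip₂₃ x hx y hy y' hy' z hz z' hz' hyy' hzz'
  flip₁₃ z hz z' hz' y hy x hx x' hx' hzz' hxx' := h.flip₁₃ x hx x' hx' y hy z hz z' hz' hxx' hzz'
  flip₂₃ z hz y hy y' hy' x hx x' hx' hyy' hxx' := h.flip₁₂ x hx x' hx' y hy y' hy' z hz hxx' hyy'

end IsFlipInvariant

variable {n : ℕ}

theorem IsLatinCube.swap₁₂ {L : Fin n → Fin n → Fin n → Fin n} (hL : IsLatinCube L) :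
    IsLatinCube (fun y x z => L x y z) :=
  ⟨hL.2.1, hL.1, fun y x => hL.2.2 x y⟩

theorem IsLatinCube.swap₁₃ {L : Fin n → Fin n → Fin n → Fin n} (hL : IsLatinCube L) :
    IsLatinCube (fun z y x => L x y z) :=
  ⟨fun z x => hL.1 x z, fun y x => hL.2.2 x y, fun z y => hL.2.1 y z⟩

theorem IsSubcube.exists_eq_product {L : Fin n → Fin n → Fin n → Fin n}
    {S : Finset (Fin n × Fin n × Fin n)} (h : IsSubcube L S) :
    ∃ I J K : Finset (Fin n), I.card = 2 ∧ J.card = 2 ∧ K.card = 2 ∧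
      IsFlipInvariant L I J K ∧ S = I ×ˢ J ×ˢ K := by
  obtain ⟨i₁, i₂, j₁, j₂, k₁, k₂, hi, hj, hk, h₁, h₂, h₃, h₄, h₅, h₆, rfl⟩ := h
  refine ⟨{i₁, i₂}, {j₁, j₂}, {k₁, k₂}, Finset.card_pair hi, Finset.card_pair hj,
    Finset.card_pair hk, ⟨?_, ?_, ?_⟩, ?_⟩
  any_goals simp only [Finset.mem_insert, Finset.mem_singleton]
  · rintro x (rfl | rfl) x' (rfl | rfl) y (rfl | rfl) y' (rfl | rfl) z (rfl | rfl) hx hy <;> grind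
  · rintro x (rfl | rfl) x' (rfl | rfl) y (rfl | rfl) z (rfl | rfl) z' (rfl | rfl) hx hz <;> grind
  · rintro x (rfl | rfl) y (rfl | rfl) y' (rfl | rfl) z (rfl | rfl) z' (rfl | rfl) hy hz <;> grind
  · ext ⟨x, y, z⟩
    simp only [Finset.mem_insert, Finset.mem_singleton, Finset.mem_product, Prod.mk.injEq]
    tauto

namespace IsLatinCube

variable {L : Fin n → Fin n → Fin n → Fin n} {I J K I' J' K' : Finset (Fin n)}
  {p q : Fin n × Fin n × Fin n}

theorem fst_eq_of_two_mem_inter (hL : IsLatinCube L) (hI : I.card = 2) (hI' : I'.card = 2)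
    (hS : IsFlipInvariant L I J K) (hS' : IsFlipInvariant L I' J' K')
    (hp : p ∈ I ×ˢ J ×ˢ K ∩ I' ×ˢ J' ×ˢ K') (hq : q ∈ I ×ˢ J ×ˢ K ∩ I' ×ˢ J' ×ˢ K')
    (hpq : p ≠ q) : I = I' := by
  obtain ⟨a, b, c⟩ := p
  obtain ⟨a', b', c'⟩ := q
  simp only [Finset.mem_inter, Finset.mem_product] at hp hq
  obtain ⟨x, hx, rfl⟩ := Finset.exists_eq_pair_of_card_eq_two hI hp.1.1
  obtain ⟨x', hx', rfl⟩ := Finset.exists_eq_pair_of_card_eq_two hI' hp.2.1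
  congr 2
  by_cases ha : a' = a
  · subst a'
    apply (hL.2.1 b c).injective
    show L x b c = L x' b c
    by_cases hb : b = b'
    · subst hb
      have hc : c ≠ c' := by rintro rfl; exact hpq rfl
      rw [hS.flip₁₃ x (by simp) a (by simp) b hp.1.2.1 c hp.1.2.2 c' hq.1.2.2 hx hc,
        hS'.flip₁₃ x' (by simp) a (by simp) b hp.2.2.1 c hp.2.2.2 c' hq.2.2.2 hx' hc]
    · rw [hS.flip₁₂ x (by simp) a (by simp) b hp.1.2.1 b' hq.1.2.1 c hp.1.2.2 hx hb,
        hS'.flip₁₂ x' (by simp) a (by simp) b hp.2.2.1 b' hq.2.2.1 c hp.2.2.2 hx' hb]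
  · have h₁ := hq.1.1
    have h₂ := hq.2.1
    simp only [Finset.mem_insert, Finset.mem_singleton, ha, false_or] at h₁ h₂
    rw [← h₁, ← h₂]

theorem product_eq_of_two_mem_inter (hL : IsLatinCube L) (hI : I.card = 2) (hJ : J.card = 2)
    (hK : K.card = 2) (hI' : I'.card = 2) (hJ' : J'.card = 2) (hK' : K'.card = 2)
    (hS : IsFlipInvariant L I J K) (hS' : IsFlipInvariant L I' J' K')
    (hp : p ∈ I ×ˢ J ×ˢ K ∩ I' ×ˢ J' ×ˢ K') (hq : q ∈ I ×ˢ J ×ˢ K ∩ I' ×ˢ J' ×ˢ K')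
    (hpq : p ≠ q) : I ×ˢ J ×ˢ K = I' ×ˢ J' ×ˢ K' := by
  have mem₁₂ {r : Fin n × Fin n × Fin n} (hr : r ∈ I ×ˢ J ×ˢ K ∩ I' ×ˢ J' ×ˢ K') :
      (r.2.1, r.1, r.2.2) ∈ J ×ˢ I ×ˢ K ∩ J' ×ˢ I' ×ˢ K' := by
    simp only [Finset.mem_inter, Finset.mem_product] at hr ⊢
    tauto
  have mem₁₃ {r : Fin n × Fin n × Fin n} (hr : r ∈ I ×ˢ J ×ˢ K ∩ I' ×ˢ J' ×ˢ K') :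
      (r.2.2, r.2.1, r.1) ∈ K ×ˢ J ×ˢ I ∩ K' ×ˢ J' ×ˢ I' := by
    simp only [Finset.mem_inter, Finset.mem_product] at hr ⊢
    tauto
  have ne₁₂ : (p.2.1, p.1, p.2.2) ≠ (q.2.1, q.1, q.2.2) := by
    contrapose! hpq
    simp_all [Prod.ext_iff]
  have ne₁₃ : (p.2.2, p.2.1, p.1) ≠ (q.2.2, q.2.1, q.1) := by
    contrapose! hpq
    simp_all [Prod.ext_iff]
  rw [hL.fst_eq_of_two_mem_inter hI hI' hS hS' hp hq hpq,
    hL.swap₁₂.fst_eq_of_two_mem_inter hJ hJ' hS.swap₁₂ hS'.swap₁₂ (mem₁₂ hp) (mem₁₂ hq) ne₁₂,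
    hL.swap₁₃.fst_eq_of_two_mem_inter hK hK' hS.swap₁₃ hS'.swap₁₃ (mem₁₃ hp) (mem₁₃ hq) ne₁₃]

end IsLatinCube

/-- In any Latin cube, the intersection of two subcubes of order 2 is either empty,
a single cell, or all eight cells (i.e. the subcubes coincide). -/
theorem subcube_intersection {n : ℕ} (L : Fin n → Fin n → Fin n → Fin n)
    (hL : IsLatinCube L) (S₁ S₂ : Finset (Fin n × Fin n × Fin n))
    (h₁ : IsSubcube L S₁) (h₂ : IsSubcube L S₂) :
    S₁ ∩ S₂ = ∅ ∨ (S₁ ∩ S₂).card = 1 ∨ S₁ = S₂ := by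
  obtain h | h | h : (S₁ ∩ S₂).card = 0 ∨ (S₁ ∩ S₂).card = 1 ∨ 1 < (S₁ ∩ S₂).card := by omega
  · exact Or.inl (Finset.card_eq_zero.1 h)
  · exact Or.inr (Or.inl h)
  obtain ⟨p, hp, q, hq, hpq⟩ := Finset.one_lt_card.1 h
  obtain ⟨I, J, K, hI, hJ, hK, hS₁, rfl⟩ := h₁.exists_eq_product
  obtain ⟨I', J', K', hI', hJ', hK', hS₂, rfl⟩ := h₂.exists_eq_product
  exact Or.inr <| Or.inr <| hL.product_eq_of_two_mem_inter hI hJ hK hI' hJ' hK' hS₁ hS₂ hp hq hpq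
end

section
/- In the starting Latin cube L of order n=2t, for every file F_{i1,j1} = {(i1,j1,k) : 1 ≤ k ≤ n} and every row-layer index i2 there exists a unique column-layer index j2 such that L(i1,j1,x) = L(i2,j2,x) for all x ∈ {1,...,n}; symmetrically, for every j2 there is a unique i2 with this property. -/
/-- The starting Latin cube of order `2*t`. -/
def SLC (t : ℕ) (i j k : ℤ) : ℤ :=
  if (i ≤ t ∧ j ≤ t ∧ k ≤ t) ∨ ((t:ℤ) < i ∧ (t:ℤ) < k ∧ j ≤ t) then rmod t (j - i + k)
  else if ((t:ℤ) < i ∧ (t:ℤ) < j ∧ k ≤ t) ∨ ((t:ℤ) < j ∧ (t:ℤ) < k ∧ i ≤ t) then rmod t (i - j + k)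
  else if (i ≤ t ∧ k ≤ t ∧ (t:ℤ) < j) ∨ ((t:ℤ) < i ∧ (t:ℤ) < j ∧ (t:ℤ) < k) then rmod t (j - i + k) + t
  else rmod t (i - j + k) + t

lemma rmod_bounds (t : ℕ) (ht : 1 ≤ t) (x : ℤ) : 1 ≤ rmod t x ∧ rmod t x ≤ t := by
  unfold rmod
  have h0 : (0:ℤ) < (t:ℤ) := by exact_mod_cast ht
  have := Int.emod_nonneg (x - 1) (by omega : (t:ℤ) ≠ 0)
  have := Int.emod_lt_of_pos (x - 1) h0
  omega

lemma rmod_dvd (t : ℕ) (x : ℤ) : (t:ℤ) ∣ (rmod t x - x) := by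
  unfold rmod
  rw [Int.emod_def]
  exact ⟨-((x-1)/t), by ring⟩

lemma rmod_eq_rmod_iff (t : ℕ) (ht : 1 ≤ t) (x y : ℤ) :
    rmod t x = rmod t y ↔ (t:ℤ) ∣ (y - x) := by
  unfold rmod
  constructor
  · intro h
    have h2 : (x - 1) % t = (y - 1) % t := by omega
    have : (x - 1) ≡ (y - 1) [ZMOD t] := h2
    have := Int.ModEq.dvd this
    simpa using this
  · intro h
    have : (x - 1) ≡ (y - 1) [ZMOD t] := Int.modEq_iff_dvd.2 (by simpa using h)
    simp only [Int.ModEq] at this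
    omega

lemma SLC_eval (t : ℕ) (ht : 1 ≤ t) (i j k : ℤ) :
    SLC t i j k =
      if i ≤ (t:ℤ) then
        if j ≤ (t:ℤ) then (if k ≤ (t:ℤ) then rmod t (j-i+k) else rmod t (i-j+k) + t)
        else (if k ≤ (t:ℤ) then rmod t (j-i+k) + t else rmod t (i-j+k))
      else
        if j ≤ (t:ℤ) then (if k ≤ (t:ℤ) then rmod t (i-j+k) + t else rmod t (j-i+k))
        else (if k ≤ (t:ℤ) then rmod t (i-j+k) else rmod t (j-i+k) + t) := by
  unfold SLC
  split_ifs <;> first | rfl | omega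

/-- The matching condition for two files. -/
def Cond (t : ℕ) (i1 j1 i2 j2 : ℤ) : Prop :=
  ((i1 ≤ (t:ℤ) ↔ i2 ≤ (t:ℤ)) ∧ (j1 ≤ (t:ℤ) ↔ j2 ≤ (t:ℤ)) ∧
      (t:ℤ) ∣ (j2 - i2) - (j1 - i1)) ∨
  (¬(i1 ≤ (t:ℤ) ↔ i2 ≤ (t:ℤ)) ∧ ¬(j1 ≤ (t:ℤ) ↔ j2 ≤ (t:ℤ)) ∧
      (t:ℤ) ∣ (i2 - j2) - (j1 - i1))

lemma cond_symm (t : ℕ) (i1 j1 i2 j2 : ℤ) :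
    Cond t i1 j1 i2 j2 ↔ Cond t j1 i1 j2 i2 := by
  unfold Cond
  constructor <;> rintro (⟨a, b, c⟩ | ⟨a, b, c⟩)
  · exact Or.inl ⟨b, a, by convert dvd_neg.2 c using 1; rfl; ring⟩
  · exact Or.inr ⟨b, a, by convert dvd_neg.2 c using 1; rfl; ring⟩
  · exact Or.inl ⟨b, a, by convert dvd_neg.2 c using 1; rfl; ring⟩
  · exact Or.inr ⟨b, a, by convert dvd_neg.2 c using 1; rfl; ring⟩

lemma match_iff (t : ℕ) (ht : 1 ≤ t) (i1 j1 i2 j2 : ℤ) :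
    (∀ x ∈ Finset.Icc (1:ℤ) (2*t), SLC t i1 j1 x = SLC t i2 j2 x) ↔ Cond t i1 j1 i2 j2 := by
  constructor
  · intro h
    have h1 := h 1 (by simp [Finset.mem_Icc]; omega)
    rw [SLC_eval t ht, SLC_eval t ht] at h1
    have B1 := rmod_bounds t ht (j1 - i1 + 1)
    have B2 := rmod_bounds t ht (i1 - j1 + 1)
    have B3 := rmod_bounds t ht (j2 - i2 + 1)
    have B4 := rmod_bounds t ht (i2 - j2 + 1)
    have h1t : (1:ℤ) ≤ (t:ℤ) := by exact_mod_cast ht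
    unfold Cond
    by_cases hA : i1 ≤ (t:ℤ) <;> by_cases hB : j1 ≤ (t:ℤ) <;>
      by_cases hC : i2 ≤ (t:ℤ) <;> by_cases hD : j2 ≤ (t:ℤ) <;>
      simp only [hA, hB, hC, hD, if_pos, if_neg, if_true, if_false, h1t,
        not_true, not_false_iff] at h1 <;>
      first
      | (exfalso; omega)
      | (have hEq : rmod t (j1 - i1 + 1) = rmod t (j2 - i2 + 1) := by omega
         obtain ⟨c, hc⟩ := (rmod_eq_rmod_iff t ht _ _).1 hEq
         refine Or.inl ⟨by tauto, by tauto, c, by linarith⟩)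
      | (have hEq : rmod t (i1 - j1 + 1) = rmod t (i2 - j2 + 1) := by omega
         obtain ⟨c, hc⟩ := (rmod_eq_rmod_iff t ht _ _).1 hEq
         refine Or.inl ⟨by tauto, by tauto, -c, by linarith⟩)
      | (have hEq : rmod t (j1 - i1 + 1) = rmod t (i2 - j2 + 1) := by omega
         obtain ⟨c, hc⟩ := (rmod_eq_rmod_iff t ht _ _).1 hEq
         refine Or.inr ⟨by tauto, by tauto, c, by linarith⟩)
      | (have hEq : rmod t (i1 - j1 + 1) = rmod t (j2 - i2 + 1) := by omega
         obtain ⟨c, hc⟩ := (rmod_eq_rmod_iff t ht _ _).1 hEq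
         refine Or.inr ⟨by tauto, by tauto, -c, by linarith⟩)
  · rintro (⟨hii, hjj, hd⟩ | ⟨hii, hjj, hd⟩) x _
    · have hii' : (i1 ≤ (t:ℤ) ∧ i2 ≤ (t:ℤ)) ∨ (¬i1 ≤ (t:ℤ) ∧ ¬i2 ≤ (t:ℤ)) := by tauto
      have hjj' : (j1 ≤ (t:ℤ) ∧ j2 ≤ (t:ℤ)) ∨ (¬j1 ≤ (t:ℤ) ∧ ¬j2 ≤ (t:ℤ)) := by tauto
      have e1 : rmod t (j1 - i1 + x) = rmod t (j2 - i2 + x) :=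
        (rmod_eq_rmod_iff t ht _ _).2 (by convert hd using 1; ring)
      have e2 : rmod t (i1 - j1 + x) = rmod t (i2 - j2 + x) :=
        (rmod_eq_rmod_iff t ht _ _).2 (by convert dvd_neg.2 hd using 1; rfl; ring)
      rw [SLC_eval t ht, SLC_eval t ht]
      rcases hii' with ⟨hA, hC⟩ | ⟨hA, hC⟩ <;> rcases hjj' with ⟨hB, hD⟩ | ⟨hB, hD⟩ <;>
        by_cases hX : x ≤ (t:ℤ) <;>
        simp only [hA, hB, hC, hD, hX, if_true, if_false, ite_true, ite_false,
          not_true, not_false_iff] <;>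
        first | rw [e1] | rw [e2]
    · have hii' : (i1 ≤ (t:ℤ) ∧ ¬i2 ≤ (t:ℤ)) ∨ (¬i1 ≤ (t:ℤ) ∧ i2 ≤ (t:ℤ)) := by tauto
      have hjj' : (j1 ≤ (t:ℤ) ∧ ¬j2 ≤ (t:ℤ)) ∨ (¬j1 ≤ (t:ℤ) ∧ j2 ≤ (t:ℤ)) := by tauto
      have e1 : rmod t (j1 - i1 + x) = rmod t (i2 - j2 + x) :=
        (rmod_eq_rmod_iff t ht _ _).2 (by convert hd using 1; ring)
      have e2 : rmod t (i1 - j1 + x) = rmod t (j2 - i2 + x) :=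
        (rmod_eq_rmod_iff t ht _ _).2 (by convert dvd_neg.2 hd using 1; rfl; ring)
      rw [SLC_eval t ht, SLC_eval t ht]
      rcases hii' with ⟨hA, hC⟩ | ⟨hA, hC⟩ <;> rcases hjj' with ⟨hB, hD⟩ | ⟨hB, hD⟩ <;>
        by_cases hX : x ≤ (t:ℤ) <;>
        simp only [hA, hB, hC, hD, hX, if_true, if_false, ite_true, ite_false,
          not_true, not_false_iff] <;>
        first | rw [e1] | rw [e2]

lemma int_eq_of_dvd_of_lt (T a : ℤ) (h0 : 0 < T) (hd : T ∣ a) (h1 : -T < a) (h2 : a < T) :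
    a = 0 := by
  obtain ⟨c, rfl⟩ := hd
  rcases lt_trichotomy c 0 with h | h | h
  · nlinarith
  · simp [h]
  · nlinarith

lemma exUnique (t : ℕ) (ht : 1 ≤ t) (i1 j1 : ℤ)
    (hj1 : j1 ∈ Finset.Icc (1:ℤ) (2*t)) :
    ∀ i2 ∈ Finset.Icc (1:ℤ) (2*t),
      ∃! j2, j2 ∈ Finset.Icc (1:ℤ) (2*t) ∧ Cond t i1 j1 i2 j2 := by
  intro i2 hi2
  simp only [Finset.mem_Icc] at hj1 hi2
  have h1t : (1:ℤ) ≤ (t:ℤ) := by exact_mod_cast ht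
  by_cases hI : (i1 ≤ (t:ℤ) ↔ i2 ≤ (t:ℤ))
  · -- same side: j2 ≡ j1 + i2 - i1, same side as j1
    set r : ℤ := j1 + i2 - i1 with hr
    set j2 : ℤ := if j1 ≤ (t:ℤ) then rmod t r else rmod t r + t with hj2
    have Br := rmod_bounds t ht r
    have hdv := rmod_dvd t r
    have hside : (j1 ≤ (t:ℤ) ↔ j2 ≤ (t:ℤ)) := by
      by_cases h : j1 ≤ (t:ℤ) <;> simp [hj2, h] <;> omega
    have hdvd2 : (t:ℤ) ∣ j2 - r := by
      by_cases h : j1 ≤ (t:ℤ) <;> simp only [hj2, if_pos, if_neg, h, if_true, if_false]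
      · exact hdv
      · exact (by convert dvd_add hdv (dvd_refl (t:ℤ)) using 1; rfl; ring)
    refine ⟨j2, ⟨by simp [Finset.mem_Icc]; by_cases h : j1 ≤ (t:ℤ) <;> simp [hj2, h] <;> omega,
      Or.inl ⟨hI, hside, by convert hdvd2 using 1; ring⟩⟩, ?_⟩
    rintro y ⟨hy, hcy⟩
    simp only [Finset.mem_Icc] at hy
    rcases hcy with ⟨hyi, hyj, hyd⟩ | ⟨hyi, hyj, hyd⟩
    · have hydvd : (t:ℤ) ∣ y - j2 := by
        obtain ⟨c, hc⟩ := hyd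
        obtain ⟨d, hd2⟩ := hdvd2
        exact ⟨c - d, by linarith [hc, hd2]⟩
      have hys : (j1 ≤ (t:ℤ) ↔ y ≤ (t:ℤ)) := hyj
      have : y - j2 = 0 := by
        apply int_eq_of_dvd_of_lt (t:ℤ) _ (by omega) hydvd
        · by_cases h : j1 ≤ (t:ℤ) <;> simp only [hj2, h, if_true, if_false] <;> omega
        · by_cases h : j1 ≤ (t:ℤ) <;> simp only [hj2, h, if_true, if_false] <;> omega
      omega
    · exact absurd hI hyi
  · -- opposite side: j2 ≡ i1 + i2 - j1, opposite side to j1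
    set r : ℤ := i1 + i2 - j1 with hr
    set j2 : ℤ := if j1 ≤ (t:ℤ) then rmod t r + t else rmod t r with hj2
    have Br := rmod_bounds t ht r
    have hdv := rmod_dvd t r
    have hside : ¬(j1 ≤ (t:ℤ) ↔ j2 ≤ (t:ℤ)) := by
      by_cases h : j1 ≤ (t:ℤ) <;> simp [hj2, h] <;> omega
    have hdvd2 : (t:ℤ) ∣ j2 - r := by
      by_cases h : j1 ≤ (t:ℤ) <;> simp only [hj2, if_pos, if_neg, h, if_true, if_false]
      · exact (by convert dvd_add hdv (dvd_refl (t:ℤ)) using 1; rfl; ring)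
      · exact hdv
    refine ⟨j2, ⟨by simp [Finset.mem_Icc]; by_cases h : j1 ≤ (t:ℤ) <;> simp [hj2, h] <;> omega,
      Or.inr ⟨hI, hside, by convert dvd_neg.2 hdvd2 using 1; rfl; ring⟩⟩, ?_⟩
    rintro y ⟨hy, hcy⟩
    simp only [Finset.mem_Icc] at hy
    rcases hcy with ⟨hyi, hyj, hyd⟩ | ⟨hyi, hyj, hyd⟩
    · exact absurd hyi hI
    · have hydvd : (t:ℤ) ∣ y - j2 := by
        obtain ⟨c, hc⟩ := hyd
        obtain ⟨d, hd2⟩ := hdvd2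
        exact ⟨-c - d, by linarith [hc, hd2]⟩
      have : y - j2 = 0 := by
        apply int_eq_of_dvd_of_lt (t:ℤ) _ (by omega) hydvd
        · by_cases h : j1 ≤ (t:ℤ) <;> simp only [hj2, h, if_true, if_false] <;> [skip; skip] <;> first | (simp only [not_iff] at hyj; omega) | omega
        · by_cases h : j1 ≤ (t:ℤ) <;> simp only [hj2, h, if_true, if_false] <;> first | (simp only [not_iff] at hyj; omega) | omega
      omega

/-- In the starting Latin cube of order `n = 2t`: for every file `F_{i₁,j₁}` and every
row-layer index `i₂` there is a unique column-layer index `j₂` with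
`L(i₁,j₁,x) = L(i₂,j₂,x)` for all `x`; symmetrically, for every `j₂` there is a unique
such `i₂`. -/
theorem starting_latin_cube_file_blocks (t : ℕ) (ht : 1 ≤ t)
    (i₁ j₁ : ℤ) (hi₁ : i₁ ∈ Finset.Icc (1:ℤ) (2*t)) (hj₁ : j₁ ∈ Finset.Icc (1:ℤ) (2*t)) :
    (∀ i₂ ∈ Finset.Icc (1:ℤ) (2*t),
      ∃! j₂, j₂ ∈ Finset.Icc (1:ℤ) (2*t) ∧
        ∀ x ∈ Finset.Icc (1:ℤ) (2*t), SLC t i₁ j₁ x = SLC t i₂ j₂ x) ∧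
    (∀ j₂ ∈ Finset.Icc (1:ℤ) (2*t),
      ∃! i₂, i₂ ∈ Finset.Icc (1:ℤ) (2*t) ∧
        ∀ x ∈ Finset.Icc (1:ℤ) (2*t), SLC t i₁ j₁ x = SLC t i₂ j₂ x) := by
  constructor
  · intro i₂ hi₂
    have := exUnique t ht i₁ j₁ hj₁ i₂ hi₂
    refine (existsUnique_congr fun j₂ => ?_).2 this
    exact and_congr_right fun _ => match_iff t ht i₁ j₁ i₂ j₂
  · intro j₂ hj₂
    have := exUnique t ht j₁ i₁ hi₁ j₂ hj₂
    refine (existsUnique_congr fun i₂ => ?_).2 this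
    refine and_congr_right fun _ => ?_
    rw [match_iff t ht i₁ j₁ i₂ j₂, cond_symm]
end

section
/- In the starting Latin cube L of order n=2t, fix a symbol b and let B1 be the set of (row, column)-coordinate pairs (i,j) with L(i,j,1) = b. Then for every file layer k, all cells (i,j,k) with (i,j) ∈ B1 contain the same symbol. -/
/-!
Writing `s` for the symbol of cell `(i,j)` in file layer `1`, the symbol of `(i,j,k)` is a
function of `s` and `k` alone: for `k ≤ t` its residue is that of `s - 1 + k`, for `k > t` that
of `k + 1 - s` (mod `t`), and it lies in the other half `{1..t}` / `{t+1..2t}` from `s` exactly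
when `k > t`. Each of the eight cases `i, j, k ≤ t` or `> t` of the definition checks this by a
congruence mod `t`, so the symbol in layer `k` is constant on the cells sharing a layer-`1` symbol.
-/

section rmod

variable {t : ℕ}

lemma one_le_rmod (ht : 0 < t) (x : ℤ) : 1 ≤ rmod t x := by
  have := Int.emod_nonneg (x - 1) (by omega : (t : ℤ) ≠ 0)
  unfold rmod
  omega

lemma rmod_le (ht : 0 < t) (x : ℤ) : rmod t x ≤ t := by
  have := Int.emod_lt_of_pos (x - 1) (by omega : (0 : ℤ) < t)
  unfold rmod
  omega

lemma intCast_rmod (x : ℤ) : ((rmod t x : ℤ) : ZMod t) = x := by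
  rw [rmod]
  push_cast [ZMod.intCast_mod]
  ring

lemma rmod_congr {x y : ℤ} (h : (x : ZMod t) = y) : rmod t x = rmod t y := by
  rw [ZMod.intCast_eq_intCast_iff] at h
  rw [rmod, rmod, h.sub_right 1]

end rmod

def fileSymbol (t : ℕ) (s k : ℤ) : ℤ :=
  if k ≤ t then rmod t (s - 1 + k) + (if s ≤ t then 0 else (t : ℤ))
  else rmod t (k + 1 - s) + (if s ≤ t then (t : ℤ) else 0)

lemma SLC_eq_fileSymbol {t : ℕ} (ht : 0 < t) (i j k : ℤ) :
    SLC t i j k = fileSymbol t (SLC t i j 1) k := by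
  have := one_le_rmod ht (j - i + 1)
  have := one_le_rmod ht (i - j + 1)
  have := rmod_le ht (j - i + 1)
  have := rmod_le ht (i - j + 1)
  simp only [SLC, fileSymbol]
  split_ifs <;> (try omega) <;> simp only [add_zero, add_left_inj] <;> apply rmod_congr <;>
    push_cast [intCast_rmod, ZMod.natCast_self] <;> ring

theorem starting_latin_cube_symbol_file_block_general (t : ℕ) (ht : 1 ≤ t)
    (b : ℤ) :
    ∀ k ∈ Finset.Icc (1:ℤ) (2*t),
      ∀ i ∈ Finset.Icc (1:ℤ) (2*t), ∀ j ∈ Finset.Icc (1:ℤ) (2*t),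
      ∀ i' ∈ Finset.Icc (1:ℤ) (2*t), ∀ j' ∈ Finset.Icc (1:ℤ) (2*t),
      SLC t i j 1 = b → SLC t i' j' 1 = b → SLC t i j k = SLC t i' j' k := by
  intro k _ i _ j _ i' _ j' _ hb hb'
  rw [SLC_eq_fileSymbol ht, SLC_eq_fileSymbol ht i', hb, hb']

/-- In the starting Latin cube of order `n = 2t`: fix a symbol `b`, and let `B₁` be the
set of (row,column) pairs `(i,j)` with `L(i,j,1) = b`. Then for every file layer `k`,
all cells `(i,j,k)` with `(i,j) ∈ B₁` contain the same symbol. -/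
theorem starting_latin_cube_symbol_file_block (t : ℕ) (ht : 1 ≤ t)
    (b : ℤ) (hb : b ∈ Finset.Icc (1:ℤ) (2*t)) :
    ∀ k ∈ Finset.Icc (1:ℤ) (2*t),
      ∀ i ∈ Finset.Icc (1:ℤ) (2*t), ∀ j ∈ Finset.Icc (1:ℤ) (2*t),
      ∀ i' ∈ Finset.Icc (1:ℤ) (2*t), ∀ j' ∈ Finset.Icc (1:ℤ) (2*t),
      SLC t i j 1 = b → SLC t i' j' 1 = b → SLC t i j k = SLC t i' j' k :=
  starting_latin_cube_symbol_file_block_general t ht b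
end
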